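/- Let g : [0,1] → ℝ be absolutely continuous (or C¹) with g(1) = 0, and let X₁(t) := (1 − log t)^{−1}, X₂ := X₁ ∘ X₁. Then sup_{r ∈ (0,1]} |g(r)| X₂(r)^{1/2} ≤ (∫_0^1 t |g'(t)|² X₁(t)^{−1} dt)^{1/2}. -/

import Mathlib

open MeasureTheory

/-- `X₁ t = (1 - log t)⁻¹`, with `X₁ 0 = 0`. -/
noncomputable def X₁ (t : ℝ) : ℝ := if t = 0 then 0 else (1 - Real.log t)⁻¹

/-- `X₂ = X₁ ∘ X₁`. -/
noncomputable def X₂ (t : ℝ) : ℝ := X₁ (X₁ t)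

lemma X₁_eq {t : ℝ} (ht : t ≠ 0) : X₁ t = (1 - Real.log t)⁻¹ := if_neg ht

lemma one_sub_log_pos {t : ℝ} (h0 : 0 < t) (h1 : t ≤ 1) : 0 < 1 - Real.log t := by
  have := Real.log_nonpos h0.le h1
  linarith

lemma X₁_pos {t : ℝ} (h0 : 0 < t) (h1 : t ≤ 1) : 0 < X₁ t := by
  rw [X₁_eq h0.ne']
  exact inv_pos.mpr (one_sub_log_pos h0 h1)

lemma X₁_le_one {t : ℝ} (h0 : 0 < t) (h1 : t ≤ 1) : X₁ t ≤ 1 := by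
  rw [X₁_eq h0.ne']
  have h := one_sub_log_pos h0 h1
  rw [inv_le_one_iff₀]
  right
  have := Real.log_nonpos h0.le h1
  linarith

lemma X₂_pos {t : ℝ} (h0 : 0 < t) (h1 : t ≤ 1) : 0 < X₂ t :=
  X₁_pos (X₁_pos h0 h1) (X₁_le_one h0 h1)

lemma X₂_inv_eq {t : ℝ} (h0 : 0 < t) (h1 : t ≤ 1) :
    (X₂ t)⁻¹ = 1 + Real.log (1 - Real.log t) := by
  have h := one_sub_log_pos h0 h1
  rw [X₂, X₁_eq (X₁_pos h0 h1).ne', X₁_eq h0.ne', inv_inv, Real.log_inv]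
  ring

lemma measurable_X₁ : Measurable X₁ := by
  unfold X₁
  apply Measurable.ite (MeasurableSet.singleton 0) measurable_const
  exact (Real.measurable_log.const_sub 1).inv

lemma contOn_X₁_div {r : ℝ} (h0 : 0 < r) :
    ContinuousOn (fun t => X₁ t / t) (Set.Icc r 1) := by
  intro t ht
  have ht0 : 0 < t := lt_of_lt_of_le h0 ht.1
  have hl := one_sub_log_pos ht0 ht.2
  have : ContinuousAt (fun t => X₁ t / t) t := by
    have hc : ContinuousAt (fun t : ℝ => (1 - Real.log t)⁻¹ / t) t := by
      apply ContinuousAt.div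
      · exact ((Real.continuousAt_log ht0.ne').const_sub 1).inv₀ hl.ne'
      · exact continuousAt_id
      · exact ht0.ne'
    apply hc.congr
    filter_upwards [eventually_ne_nhds ht0.ne'] with s hs
    rw [X₁_eq hs]
  exact this.continuousWithinAt

/-- The key elementary integral. -/
lemma integral_X₁_div {r : ℝ} (h0 : 0 < r) (h1 : r ≤ 1) :
    ∫ t in r..1, X₁ t / t = Real.log (1 - Real.log r) := by
  have key : ∀ t ∈ Set.uIcc r 1, HasDerivAt (fun t => -Real.log (1 - Real.log t))
      (X₁ t / t) t := by
    intro t ht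
    rw [Set.uIcc_of_le h1] at ht
    have ht0 : 0 < t := lt_of_lt_of_le h0 ht.1
    have hl := one_sub_log_pos ht0 ht.2
    have h1' : HasDerivAt (fun t : ℝ => 1 - Real.log t) (-t⁻¹) t := by
      simpa using ((Real.hasDerivAt_log ht0.ne').const_sub 1)
    have h2 : HasDerivAt (fun t : ℝ => Real.log (1 - Real.log t))
        ((1 - Real.log t)⁻¹ * (-t⁻¹)) t :=
      by have := (Real.hasDerivAt_log hl.ne').comp t h1'; exact this
    have := h2.neg
    refine this.congr_deriv ?_
    rw [X₁_eq ht0.ne']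
    field_simp
  have hcont : ContinuousOn (fun t => X₁ t / t) (Set.uIcc r 1) := by
    rw [Set.uIcc_of_le h1]; exact contOn_X₁_div h0
  have := intervalIntegral.integral_eq_sub_of_hasDerivAt key hcont.intervalIntegrable
  rw [this]
  simp

lemma lintegral_X₁_div {r : ℝ} (h0 : 0 < r) (h1 : r ≤ 1) :
    ∫⁻ t in Set.Ioo r 1, ENNReal.ofReal (X₁ t / t) =
      ENNReal.ofReal (Real.log (1 - Real.log r)) := by
  have hint : IntegrableOn (fun t => X₁ t / t) (Set.Ioo r 1) :=
    ((contOn_X₁_div h0).integrableOn_Icc).mono_set Set.Ioo_subset_Icc_self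
  have hnn : 0 ≤ᵐ[volume.restrict (Set.Ioo r 1)] fun t => X₁ t / t := by
    rw [Filter.EventuallyLE, ae_restrict_iff' measurableSet_Ioo]
    filter_upwards with t ht
    have ht0 : 0 < t := lt_of_lt_of_le h0 ht.1.le
    exact div_nonneg (X₁_pos ht0 ht.2.le).le ht0.le
  rw [← ofReal_integral_eq_lintegral_ofReal hint hnn, ← integral_Ioc_eq_integral_Ioo,
    ← intervalIntegral.integral_of_le h1, integral_X₁_div h0 h1]

theorem onedim_lemma (g g' : ℝ → ℝ)
    (hg : ∀ t ∈ Set.Icc (0 : ℝ) 1, HasDerivAt g (g' t) t)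
    (hg1 : g 1 = 0) :
    ⨆ r ∈ Set.Ioc (0 : ℝ) 1, ENNReal.ofReal (|g r| * X₂ r ^ ((1 : ℝ) / 2)) ≤
      (∫⁻ t in Set.Ioo (0 : ℝ) 1,
          ENNReal.ofReal (t * |g' t| ^ 2 * (X₁ t)⁻¹)) ^ ((1 : ℝ) / 2) := by
  set I := ∫⁻ t in Set.Ioo (0 : ℝ) 1, ENNReal.ofReal (t * |g' t| ^ 2 * (X₁ t)⁻¹) with hIdef
  refine iSup₂_le fun r hr => ?_
  obtain ⟨hr0, hr1⟩ := hr
  by_cases hI : I = ⊤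
  · rw [hI, ENNReal.top_rpow_of_pos (by norm_num)]
    exact le_top
  -- notation
  set φ : ℝ → ℝ := fun t => t * |g' t| ^ 2 * (X₁ t)⁻¹ with hφdef
  have hsub : Set.Ioo r 1 ⊆ Set.Ioo (0:ℝ) 1 := Set.Ioo_subset_Ioo hr0.le le_rfl
  -- measurability of g' on Ioo r 1
  have hae : g' =ᵐ[volume.restrict (Set.Ioo r 1)] deriv g := by
    rw [Filter.EventuallyEq, ae_restrict_iff' measurableSet_Ioo]
    filter_upwards with t ht
    exact ((hg t ⟨(hr0.trans ht.1).le, ht.2.le⟩).deriv).symm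
  have hmeas : AEMeasurable g' (volume.restrict (Set.Ioo r 1)) :=
    (measurable_deriv g).aemeasurable.congr hae.symm
  have hφmeas : AEMeasurable φ (volume.restrict (Set.Ioo r 1)) := by
    apply AEMeasurable.mul
    · exact (aemeasurable_id.mul (((continuous_abs.measurable.comp_aemeasurable hmeas).pow_const 2)))
    · exact (measurable_X₁.inv).aemeasurable
  -- pointwise facts on Ioo r 1
  have hφnn : ∀ t ∈ Set.Ioo r 1, 0 ≤ φ t := by
    intro t ht
    have ht0 : 0 < t := hr0.trans ht.1
    have := (X₁_pos ht0 ht.2.le)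
    positivity
  have hfac : ∀ t ∈ Set.Ioo r 1,
      Real.sqrt (φ t) * Real.sqrt (X₁ t / t) = |g' t| := by
    intro t ht
    have ht0 : 0 < t := hr0.trans ht.1
    have hX := X₁_pos ht0 ht.2.le
    rw [← Real.sqrt_mul (hφnn t ht)]
    have : φ t * (X₁ t / t) = |g' t| ^ 2 := by
      simp only [hφdef]
      field_simp
    rw [this, Real.sqrt_sq (abs_nonneg _)]
  -- J1: truncated energy
  set J1 := ∫⁻ t in Set.Ioo r 1, ENNReal.ofReal (φ t) with hJ1def
  have hJ1_le : J1 ≤ I := lintegral_mono_set hsub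
  have hJ1_ne : J1 ≠ ⊤ := fun h => hI (top_le_iff.mp (h ▸ hJ1_le))
  -- integrability of φ on Ioo r 1
  have hφnn_ae : 0 ≤ᵐ[volume.restrict (Set.Ioo r 1)] φ := by
    rw [Filter.EventuallyLE, ae_restrict_iff' measurableSet_Ioo]
    filter_upwards with t ht using hφnn t ht
  have hφint : IntegrableOn φ (Set.Ioo r 1) := by
    refine ⟨hφmeas.aestronglyMeasurable, ?_⟩
    rw [hasFiniteIntegral_iff_ofReal hφnn_ae]
    exact lt_of_le_of_ne le_top hJ1_ne
  -- integrability of g' on Ioo r 1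
  have hbound : ∀ t ∈ Set.Ioo r 1, ‖g' t‖ ≤ φ t / 2 + 1 / (2 * r) := by
    intro t ht
    have ht0 : 0 < t := hr0.trans ht.1
    have hX := X₁_pos ht0 ht.2.le
    have h1 : |g' t| ≤ (φ t + X₁ t / t) / 2 := by
      have := hfac t ht
      nlinarith [Real.sq_sqrt (hφnn t ht), Real.sq_sqrt (div_nonneg hX.le ht0.le),
        sq_nonneg (Real.sqrt (φ t) - Real.sqrt (X₁ t / t))]
    have h2 : X₁ t / t ≤ 1 / r := by
      apply div_le_div₀ (by norm_num) (X₁_le_one ht0 ht.2.le) hr0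
      exact ht.1.le
    rw [Real.norm_eq_abs]
    calc |g' t| ≤ (φ t + X₁ t / t) / 2 := h1
      _ ≤ (φ t + 1 / r) / 2 := by linarith
      _ = φ t / 2 + 1 / (2 * r) := by field_simp
  have hgint : IntegrableOn g' (Set.Ioo r 1) := by
    apply Integrable.mono' ((hφint.div_const 2).add (integrable_const (1 / (2 * r))))
      (hmeas.aestronglyMeasurable)
    rw [ae_restrict_iff' measurableSet_Ioo]
    filter_upwards with t ht using hbound t ht
  have hiint : IntervalIntegrable g' volume r 1 := by
    rw [intervalIntegrable_iff, Set.uIoc_of_le hr1]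
    exact hgint.congr_set_ae MeasureTheory.Ioo_ae_eq_Ioc.symm
  -- FTC
  have hftc : ∫ t in r..1, g' t = g 1 - g r := by
    apply intervalIntegral.integral_eq_sub_of_hasDerivAt
    · intro t ht
      rw [Set.uIcc_of_le hr1] at ht
      exact hg t ⟨(hr0.trans_le ht.1).le, ht.2⟩
    · exact hiint
  have hgr : |g r| ≤ ∫ t in Set.Ioo r 1, |g' t| := by
    have h1 : |g r| = |∫ t in r..1, g' t| := by
      rw [hftc, hg1, zero_sub, abs_neg]
    rw [h1]
    calc |∫ t in r..1, g' t| ≤ ∫ t in r..1, |g' t| :=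
          intervalIntegral.abs_integral_le_integral_abs hr1
      _ = ∫ t in Set.Ioo r 1, |g' t| := by
          rw [intervalIntegral.integral_of_le hr1, integral_Ioc_eq_integral_Ioo]
  -- to lintegral
  have hstep1 : ENNReal.ofReal |g r| ≤ ∫⁻ t in Set.Ioo r 1, ENNReal.ofReal |g' t| := by
    calc ENNReal.ofReal |g r| ≤ ENNReal.ofReal (∫ t in Set.Ioo r 1, |g' t|) :=
          ENNReal.ofReal_le_ofReal hgr
      _ = ∫⁻ t in Set.Ioo r 1, ENNReal.ofReal |g' t| :=
          ofReal_integral_eq_lintegral_ofReal hgint.abs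
            (Filter.Eventually.of_forall fun t => abs_nonneg _)
  -- Cauchy–Schwarz
  set K := ∫⁻ t in Set.Ioo r 1, ENNReal.ofReal (X₁ t / t) with hKdef
  have hCS : (∫⁻ t in Set.Ioo r 1, ENNReal.ofReal |g' t|) ≤
      J1 ^ ((1:ℝ)/2) * K ^ ((1:ℝ)/2) := by
    have hfm : AEMeasurable (fun t => ENNReal.ofReal (Real.sqrt (φ t)))
        (volume.restrict (Set.Ioo r 1)) :=
      (Real.continuous_sqrt.measurable.comp_aemeasurable hφmeas).ennreal_ofReal
    have hgm : AEMeasurable (fun t => ENNReal.ofReal (Real.sqrt (X₁ t / t)))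
        (volume.restrict (Set.Ioo r 1)) :=
      (Real.continuous_sqrt.measurable.comp_aemeasurable (measurable_X₁.div measurable_id).aemeasurable).ennreal_ofReal
    have heq : ∫⁻ t in Set.Ioo r 1, ENNReal.ofReal |g' t| =
        ∫⁻ t in Set.Ioo r 1,
          (fun t => ENNReal.ofReal (Real.sqrt (φ t)) * ENNReal.ofReal (Real.sqrt (X₁ t / t))) t := by
      apply setLIntegral_congr_fun measurableSet_Ioo
      intro t ht
      dsimp only
      rw [← ENNReal.ofReal_mul (Real.sqrt_nonneg _), hfac t ht]
    rw [heq]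
    have := ENNReal.lintegral_mul_le_Lp_mul_Lq (volume.restrict (Set.Ioo r 1))
      (Real.HolderConjugate.two_two : (2:ℝ).HolderConjugate 2) hfm hgm
    refine le_trans this ?_
    have e1 : ∫⁻ t in Set.Ioo r 1, ENNReal.ofReal (Real.sqrt (φ t)) ^ (2:ℝ) = J1 := by
      apply setLIntegral_congr_fun measurableSet_Ioo
      intro t ht
      dsimp only
      rw [ENNReal.ofReal_rpow_of_nonneg (Real.sqrt_nonneg _) (by norm_num),
        Real.rpow_two, Real.sq_sqrt (hφnn t ht)]
    have e2 : ∫⁻ t in Set.Ioo r 1, ENNReal.ofReal (Real.sqrt (X₁ t / t)) ^ (2:ℝ) = K := by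
      apply setLIntegral_congr_fun measurableSet_Ioo
      intro t ht
      have ht0 : 0 < t := hr0.trans ht.1
      dsimp only
      rw [ENNReal.ofReal_rpow_of_nonneg (Real.sqrt_nonneg _) (by norm_num),
        Real.rpow_two, Real.sq_sqrt (div_nonneg (X₁_pos ht0 ht.2.le).le ht0.le)]
    rw [e1, e2]
  -- bound K
  have hK : K ≤ ENNReal.ofReal ((X₂ r)⁻¹) := by
    rw [hKdef, lintegral_X₁_div hr0 hr1, X₂_inv_eq hr0 hr1]
    apply ENNReal.ofReal_le_ofReal
    linarith
  -- finish
  have hmain : ENNReal.ofReal |g r| ≤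
      I ^ ((1:ℝ)/2) * ENNReal.ofReal ((X₂ r)⁻¹) ^ ((1:ℝ)/2) := by
    refine hstep1.trans (hCS.trans ?_)
    exact mul_le_mul' (ENNReal.rpow_le_rpow hJ1_le (by norm_num))
      (ENNReal.rpow_le_rpow hK (by norm_num))
  have hX2 := X₂_pos hr0 hr1
  calc ENNReal.ofReal (|g r| * X₂ r ^ ((1:ℝ)/2))
      = ENNReal.ofReal |g r| * ENNReal.ofReal (X₂ r ^ ((1:ℝ)/2)) :=
        ENNReal.ofReal_mul (abs_nonneg _)
    _ ≤ (I ^ ((1:ℝ)/2) * ENNReal.ofReal ((X₂ r)⁻¹) ^ ((1:ℝ)/2)) *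
          ENNReal.ofReal (X₂ r ^ ((1:ℝ)/2)) := mul_le_mul_left hmain _
    _ = I ^ ((1:ℝ)/2) * (ENNReal.ofReal ((X₂ r)⁻¹) ^ ((1:ℝ)/2) *
          ENNReal.ofReal (X₂ r ^ ((1:ℝ)/2))) := by ring
    _ = I ^ ((1:ℝ)/2) := by
        rw [ENNReal.ofReal_rpow_of_nonneg (inv_nonneg.mpr hX2.le) (by norm_num),
          ← ENNReal.ofReal_mul (Real.rpow_nonneg (inv_nonneg.mpr hX2.le) _),
          ← Real.mul_rpow (inv_nonneg.mpr hX2.le) hX2.le, inv_mul_cancel₀ hX2.ne',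
          Real.one_rpow, ENNReal.ofReal_one, mul_one]
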